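/- arXiv:1909.09997 — 3 statements merged into one kernel-verified Lean document; each statement's English description precedes it below -/
import Mathlib

section
/- Let F be a field and λ ∈ F with λ ≠ 0 and λ ≠ 1; set u₂ = [[1,1],[0,1]] and u₃ = [[1,λ],[0,1]] in GL₂(F). Then: (a) the set of g ∈ GL₂(F) such that g, u₂⁻¹ g u₂ and u₃⁻¹ g u₃ are all lower-triangular is exactly the set of scalar matrices {a·I₂ : a ∈ F^×}; (b) every triple (M₁, M₂, M₃) ∈ M₂(F)³ can be written as M₁ = X + L₁, M₂ = X + u₂ L₂ u₂⁻¹, M₃ = X + u₃ L₃ u₃⁻¹ for some X ∈ M₂(F) and lower-triangular L₁, L₂, L₃ ∈ M₂(F). (This expresses that the diagonal GL₂ in GL₂³ has an open orbit on the triple product of flag varieties, with stabiliser exactly the centre.) -/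
open Matrix

lemma uinv_aux (F : Type*) [Field F] (t : F) :
    (!![(1:F), t; 0, 1])⁻¹ = !![1, -t; 0, 1] := by
  apply inv_eq_right_inv
  ext i j
  fin_cases i <;> fin_cases j <;>
    simp [Matrix.mul_apply, Fin.sum_univ_two, Matrix.one_apply]

/-- Let `λ ∈ F` with `λ ≠ 0, 1`, and set `u₂ = [[1,1],[0,1]]`,
`u₃ = [[1,λ],[0,1]]`.
(a) A matrix `g ∈ GL₂(F)` is such that `g`, `u₂⁻¹ g u₂` and `u₃⁻¹ g u₃` are all
lower-triangular iff `g` is a nonzero scalar matrix.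
(b) Every triple `(M₁, M₂, M₃)` of `2×2` matrices can be written
`M₁ = X + L₁`, `M₂ = X + u₂ L₂ u₂⁻¹`, `M₃ = X + u₃ L₃ u₃⁻¹` with the `Lᵢ`
lower-triangular. -/
theorem stmt_15 (F : Type*) [Field F] (lam : F) (h0 : lam ≠ 0) (h1 : lam ≠ 1) :
    (∀ g : Matrix (Fin 2) (Fin 2) F, IsUnit g →
      ((g 0 1 = 0 ∧
        ((!![(1 : F), 1; 0, 1])⁻¹ * g * !![(1 : F), 1; 0, 1]) 0 1 = 0 ∧
        ((!![(1 : F), lam; 0, 1])⁻¹ * g * !![(1 : F), lam; 0, 1]) 0 1 = 0) ↔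
       ∃ a : F, a ≠ 0 ∧ g = a • (1 : Matrix (Fin 2) (Fin 2) F))) ∧
    (∀ M₁ M₂ M₃ : Matrix (Fin 2) (Fin 2) F,
      ∃ X L₁ L₂ L₃ : Matrix (Fin 2) (Fin 2) F,
        L₁ 0 1 = 0 ∧ L₂ 0 1 = 0 ∧ L₃ 0 1 = 0 ∧
        M₁ = X + L₁ ∧
        M₂ = X + !![(1 : F), 1; 0, 1] * L₂ * (!![(1 : F), 1; 0, 1])⁻¹ ∧
        M₃ = X + !![(1 : F), lam; 0, 1] * L₃ * (!![(1 : F), lam; 0, 1])⁻¹) := by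
  have hsub : lam - 1 ≠ 0 := sub_ne_zero.mpr h1
  constructor
  · intro g hg
    constructor
    · rintro ⟨hb, h2, h3⟩
      rw [uinv_aux] at h2 h3
      simp [Matrix.mul_apply, Fin.sum_univ_two, Matrix.vecMul, dotProduct] at h2 h3
      have hc : g 1 0 = 0 := by
        have e2 : g 0 0 - g 1 1 - g 1 0 = 0 := by linear_combination h2 - hb
        have e3 : lam * (g 0 0 - g 1 1) - lam ^ 2 * g 1 0 = 0 := by
          linear_combination h3 - hb
        have hz : lam * (lam - 1) * g 1 0 = 0 := by linear_combination lam * e2 - e3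
        rcases mul_eq_zero.mp hz with h | h
        · exact absurd h (mul_ne_zero h0 hsub)
        · exact h
      have had : g 0 0 = g 1 1 := by
        have e2 : g 0 0 - g 1 1 - g 1 0 = 0 := by linear_combination h2 - hb
        linear_combination e2 + hc
      have hdet : g.det ≠ 0 := by
        simpa using (Matrix.isUnit_iff_isUnit_det g).mp hg
      have ha : g 0 0 ≠ 0 := by
        intro h
        apply hdet
        rw [Matrix.det_fin_two, hb, ← had, h]
        ring
      refine ⟨g 0 0, ha, ?_⟩
      ext i j
      fin_cases i <;> fin_cases j <;>
        simp [Matrix.one_apply, hb, hc, had]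
    · rintro ⟨a, ha, rfl⟩
      rw [uinv_aux, uinv_aux]
      refine ⟨by simp [Matrix.one_apply], ?_, ?_⟩ <;>
        · simp [Matrix.mul_apply, Fin.sum_univ_two, Matrix.vecMul, dotProduct,
            Matrix.one_apply]
  · intro M₁ M₂ M₃
    set a := M₁ 0 1 with ha
    set B := -(M₂ 0 1 - a) - (M₂ 0 0 - M₂ 1 1) + M₂ 1 0 with hB
    set C := -(M₃ 0 1 - a) - lam * (M₃ 0 0 - M₃ 1 1) + lam ^ 2 * M₃ 1 0 with hC
    set x10 := (C - lam * B) / (lam ^ 2 - lam) with hx10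
    set s := x10 - B with hs
    set X : Matrix (Fin 2) (Fin 2) F := !![s, a; x10, 0] with hX
    have hx10' : (lam ^ 2 - lam) * x10 = C - lam * B := by
      rw [hx10, mul_div_cancel₀]
      intro h
      apply h0
      have : lam * (lam - 1) = 0 := by linear_combination h
      rcases mul_eq_zero.mp this with h' | h'
      · exact h'
      · exact absurd h' hsub
    refine ⟨X, M₁ - X, !![1, -1; 0, 1] * (M₂ - X) * !![1, 1; 0, 1],
      !![1, -lam; 0, 1] * (M₃ - X) * !![1, lam; 0, 1], ?_, ?_, ?_, by abel, ?_, ?_⟩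
    · simp [hX, ha]
    · simp [Matrix.mul_apply, Fin.sum_univ_two, Matrix.vecMul, dotProduct,
        Matrix.sub_apply, hX]
      rw [hs]
      linear_combination -hB
    · simp [Matrix.mul_apply, Fin.sum_univ_two, Matrix.vecMul, dotProduct,
        Matrix.sub_apply, hX]
      rw [hs]
      linear_combination -hC - lam * hB + hx10'
    · rw [uinv_aux]
      have key : !![(1:F), 1; 0, 1] * (!![1, -1; 0, 1] * (M₂ - X) * !![1, 1; 0, 1]) * !![1, -1; 0, 1]
          = M₂ - X := by
        have e1 : !![(1:F), 1; 0, 1] * !![1, -1; 0, 1] = 1 := by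
          ext i j; fin_cases i <;> fin_cases j <;>
            simp [Matrix.mul_apply, Fin.sum_univ_two, Matrix.one_apply]
        have e2 : !![(1:F), 1; 0, 1] * !![1, -1; 0, 1] = !![1, 1; 0, 1] * !![1, -1; 0, 1] := rfl
        calc !![(1:F), 1; 0, 1] * (!![1, -1; 0, 1] * (M₂ - X) * !![1, 1; 0, 1]) * !![1, -1; 0, 1]
            = (!![(1:F), 1; 0, 1] * !![1, -1; 0, 1]) * (M₂ - X) *
              (!![(1:F), 1; 0, 1] * !![1, -1; 0, 1]) := by noncomm_ring
          _ = M₂ - X := by rw [e1]; simp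
      rw [key]; abel
    · rw [uinv_aux]
      have key : !![(1:F), lam; 0, 1] * (!![1, -lam; 0, 1] * (M₃ - X) * !![1, lam; 0, 1]) * !![1, -lam; 0, 1]
          = M₃ - X := by
        have e1 : !![(1:F), lam; 0, 1] * !![1, -lam; 0, 1] = 1 := by
          ext i j; fin_cases i <;> fin_cases j <;>
            simp [Matrix.mul_apply, Fin.sum_univ_two, Matrix.one_apply]
        calc !![(1:F), lam; 0, 1] * (!![1, -lam; 0, 1] * (M₃ - X) * !![1, lam; 0, 1]) * !![1, -lam; 0, 1]
            = (!![(1:F), lam; 0, 1] * !![1, -lam; 0, 1]) * (M₃ - X) *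
              (!![(1:F), lam; 0, 1] * !![1, -lam; 0, 1]) := by noncomm_ring
          _ = M₃ - X := by rw [e1]; simp
      rw [key]; abel
end

section
/- Fix a prime p and integers n ≥ 1, r ≥ 1. Let τ = diag(p·I_n, I_n) ∈ GL_{2n}(ℚ_p) and u = [[I_n, I_n],[0, I_n]] ∈ GL_{2n}(ℤ_p). Then for every g ∈ GL_{2n}(ℤ_p) such that all entries of τ^{-r} g τ^{r} lie in ℤ_p (equivalently, the upper-right n×n block of g is divisible by p^r), there exist h₁, h₂ ∈ GL_n(ℤ_p) with h₁ ≡ h₂ mod p^r such that all entries of τ^{-(r+1)} · ((u⁻¹ · diag(h₁,h₂) · u) · g⁻¹) · τ^{r+1} lie in ℤ_p. In other words, every right coset of U_{r+1} = {g ∈ GL_{2n}(ℤ_p) : τ^{-(r+1)} g τ^{r+1} integral} in U_r = {g ∈ GL_{2n}(ℤ_p) : τ^{-r} g τ^{r} integral} contains an element of the form u⁻¹ · diag(h₁,h₂) · u with h₁ ≡ h₂ mod p^r. -/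
open Matrix

/-- The `2n × 2n` matrix `τ = diag(p·I_n, I_n)` over `ℚ_p`. -/
noncomputable def tauSiegel (p : ℕ) [Fact p.Prime] (n : ℕ) :
    Matrix (Fin n ⊕ Fin n) (Fin n ⊕ Fin n) ℚ_[p] :=
  Matrix.fromBlocks ((p : ℚ_[p]) • 1) 0 0 1

/-- The `2n × 2n` matrix `τ⁻¹ = diag(p⁻¹·I_n, I_n)` over `ℚ_p`. -/
noncomputable def tauSiegelInv (p : ℕ) [Fact p.Prime] (n : ℕ) :
    Matrix (Fin n ⊕ Fin n) (Fin n ⊕ Fin n) ℚ_[p] :=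
  Matrix.fromBlocks ((p : ℚ_[p])⁻¹ • 1) 0 0 1

/-- The unipotent element `u = [[I_n, I_n],[0, I_n]]` over `ℚ_p`. -/
noncomputable def uSiegel (p : ℕ) [Fact p.Prime] (n : ℕ) :
    Matrix (Fin n ⊕ Fin n) (Fin n ⊕ Fin n) ℚ_[p] :=
  Matrix.fromBlocks 1 1 0 1

section Aux

variable {p : ℕ} [Fact p.Prime]

lemma aux_isUnit_of_toZMod_ne_zero {x : ℤ_[p]} (h : PadicInt.toZMod x ≠ 0) : IsUnit x := by
  by_contra hx
  apply h
  have hm : x ∈ IsLocalRing.maximalIdeal ℤ_[p] :=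
    (IsLocalRing.mem_maximalIdeal x).mpr (mem_nonunits_iff.mpr hx)
  rw [← PadicInt.ker_toZMod, RingHom.mem_ker] at hm
  exact hm

lemma aux_map_smul {ι κ : Type*} {R S : Type*} [CommRing R] [CommRing S] (f : R →+* S)
    (x : R) (M : Matrix ι κ R) : (x • M).map f = f x • M.map f := by
  ext i j; simp [Matrix.map_apply, Matrix.smul_apply]

lemma aux_dvd_of_norm {r : ℕ} {x : ℤ_[p]} (h : ‖((p:ℚ_[p])⁻¹)^r * (x : ℚ_[p])‖ ≤ 1) :
    (p : ℤ_[p])^r ∣ x := by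
  rw [← Ideal.mem_span_singleton, ← PadicInt.norm_le_pow_iff_mem_span_pow]
  have hx : ‖((p:ℚ_[p])⁻¹)^r * (x : ℚ_[p])‖ = (p:ℝ)^r * ‖x‖ := by
    rw [norm_mul, norm_pow, norm_inv, Padic.norm_p, inv_inv,
      PadicInt.padic_norm_e_of_padicInt]
  rw [hx] at h
  have hp : (0:ℝ) < (p:ℝ)^r := by
    have : (0:ℝ) < p := by exact_mod_cast (Fact.out : p.Prime).pos
    positivity
  rw [_root_.zpow_neg, zpow_natCast, ← one_div, le_div_iff₀ hp]
  linarith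

variable (p) in
lemma aux_tau_pow (n k : ℕ) :
    (tauSiegel p n)^k = fromBlocks (((p:ℚ_[p])^k) • 1) 0 0 1 := by
  induction k with
  | zero => simp [Matrix.fromBlocks_one]
  | succ k ih =>
    rw [pow_succ, ih, tauSiegel, fromBlocks_multiply]
    simp [Matrix.smul_mul, Matrix.mul_smul, smul_smul, pow_succ, mul_comm]

variable (p) in
lemma aux_tauInv_pow (n k : ℕ) :
    (tauSiegelInv p n)^k = fromBlocks ((((p:ℚ_[p])⁻¹)^k) • 1) 0 0 1 := by
  induction k with
  | zero => simp [Matrix.fromBlocks_one]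
  | succ k ih =>
    rw [pow_succ, ih, tauSiegelInv, fromBlocks_multiply]
    simp [Matrix.smul_mul, Matrix.mul_smul, smul_smul, pow_succ, mul_comm]

variable (p) in
lemma aux_tau_conj (n k : ℕ) (A B C D : Matrix (Fin n) (Fin n) ℚ_[p]) :
    (tauSiegelInv p n)^k * fromBlocks A B C D * (tauSiegel p n)^k
      = fromBlocks A ((((p:ℚ_[p])⁻¹)^k) • B) (((p:ℚ_[p])^k) • C) D := by
  have hp0 : (p:ℚ_[p]) ≠ 0 := Nat.cast_ne_zero.mpr (Fact.out : p.Prime).ne_zero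
  rw [aux_tau_pow, aux_tauInv_pow, fromBlocks_multiply, fromBlocks_multiply]
  simp [Matrix.smul_mul, Matrix.mul_smul, smul_smul, inv_pow,
    inv_mul_cancel₀ (pow_ne_zero k hp0)]

end Aux

/-- Fix a prime `p` and `n, r ≥ 1`.  Let `τ = diag(p·I_n, I_n)` and
`u = [[I_n, I_n],[0, I_n]]`.  For every `g ∈ GL_{2n}(ℤ_p)` such that `τ^{-r} g τ^{r}` is
integral, there exist `h₁, h₂ ∈ GL_n(ℤ_p)` with `h₁ ≡ h₂ mod p^r` such that
`τ^{-(r+1)} ⬝ ((u⁻¹ diag(h₁,h₂) u) g⁻¹) ⬝ τ^{r+1}` is integral; i.e. every right coset of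
`U_{r+1}` in `U_r` contains an element `u⁻¹ diag(h₁,h₂) u` with `h₁ ≡ h₂ mod p^r`. -/
theorem stmt_16 (p : ℕ) [Fact p.Prime] (n r : ℕ) (hn : 1 ≤ n) (hr : 1 ≤ r)
    (g : Matrix (Fin n ⊕ Fin n) (Fin n ⊕ Fin n) ℤ_[p]) (hg : IsUnit g)
    (hint : ∀ i j : Fin n ⊕ Fin n,
      ‖((tauSiegelInv p n) ^ r * g.map (fun x => (x : ℚ_[p])) * (tauSiegel p n) ^ r) i j‖ ≤ 1) :
    ∃ h₁ h₂ : Matrix (Fin n) (Fin n) ℤ_[p], IsUnit h₁ ∧ IsUnit h₂ ∧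
      (∀ i j, (p : ℤ_[p]) ^ r ∣ (h₁ i j - h₂ i j)) ∧
      (∀ i j : Fin n ⊕ Fin n,
        ‖((tauSiegelInv p n) ^ (r + 1) *
          (((uSiegel p n)⁻¹ *
              Matrix.fromBlocks (h₁.map (fun x => (x : ℚ_[p]))) 0 0 (h₂.map (fun x => (x : ℚ_[p]))) *
              uSiegel p n) *
            (g.map (fun x => (x : ℚ_[p])))⁻¹) *
          (tauSiegel p n) ^ (r + 1)) i j‖ ≤ 1) := by
  classical
  obtain ⟨s, rfl⟩ : ∃ s, r = s + 1 := ⟨r - 1, (Nat.succ_pred_eq_of_pos hr).symm⟩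
  set r := s + 1 with hrdef
  have hp0 : (p:ℚ_[p]) ≠ 0 := Nat.cast_ne_zero.mpr (Fact.out : p.Prime).ne_zero
  -- coercion ring hom and block data
  set cf : ℤ_[p] → ℚ_[p] := fun x => (x : ℚ_[p]) with hcf
  have hcrh : cf = ⇑(PadicInt.Coe.ringHom (p := p)) := rfl
  set a := g.toBlocks₁₁ with ha
  set b := g.toBlocks₁₂ with hb
  set c := g.toBlocks₂₁ with hc
  set d := g.toBlocks₂₂ with hd
  have hgblocks : g = fromBlocks a b c d := (fromBlocks_toBlocks g).symm
  -- divisibility of the upper-right block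
  have hdvd : ∀ i j, (p : ℤ_[p])^r ∣ b i j := by
    intro i j
    have h := hint (Sum.inl i) (Sum.inr j)
    rw [hgblocks, fromBlocks_map, aux_tau_conj] at h
    rw [fromBlocks_apply₁₂, Matrix.smul_apply, Matrix.map_apply, smul_eq_mul] at h
    exact aux_dvd_of_norm h
  choose b0f hb0f using hdvd
  set B0 : Matrix (Fin n) (Fin n) ℤ_[p] := Matrix.of b0f with hB0
  have hbB0 : b = (p:ℤ_[p])^r • B0 := by
    ext i j; rw [Matrix.smul_apply, smul_eq_mul]; exact hb0f i j
  -- the conjugated matrix γ and its inverse δ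
  set γ : Matrix (Fin n ⊕ Fin n) (Fin n ⊕ Fin n) ℤ_[p] :=
    fromBlocks a B0 ((p:ℤ_[p])^r • c) d with hγ
  have hγmap : γ.map cf = (tauSiegelInv p n)^r * g.map cf * (tauSiegel p n)^r := by
    rw [hγ, hgblocks, fromBlocks_map, fromBlocks_map, aux_tau_conj]
    refine fromBlocks_inj.mpr ⟨rfl, ?_, ?_, rfl⟩
    · rw [hbB0, hcrh, aux_map_smul, map_pow, map_natCast, smul_smul, inv_pow,
        inv_mul_cancel₀ (pow_ne_zero r hp0), one_smul]
    · rw [hcrh, aux_map_smul, map_pow, map_natCast]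
  have hτττ : (tauSiegelInv p n)^r * (tauSiegel p n)^r = 1 := by
    rw [aux_tau_pow, aux_tauInv_pow, fromBlocks_multiply]
    simp [Matrix.smul_mul, Matrix.mul_smul, smul_smul, inv_pow,
      inv_mul_cancel₀ (pow_ne_zero r hp0), fromBlocks_one]
  have hγunit : IsUnit γ := by
    rw [Matrix.isUnit_iff_isUnit_det]
    have hdet : (PadicInt.Coe.ringHom (p := p)) γ.det = (PadicInt.Coe.ringHom (p := p)) g.det := by
      rw [RingHom.map_det, RingHom.map_det]
      have h1 : (RingHom.mapMatrix (PadicInt.Coe.ringHom (p := p)) γ) = γ.map cf := rfl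
      have h2 : (RingHom.mapMatrix (PadicInt.Coe.ringHom (p := p)) g) = g.map cf := rfl
      have hττdet : (tauSiegelInv p n ^ r).det * (tauSiegel p n ^ r).det = 1 := by
        rw [← det_mul, hτττ, det_one]
      rw [h1, h2, hγmap, det_mul, det_mul, mul_right_comm, hττdet, one_mul]
    have hdet' : γ.det = g.det := Subtype.coe_injective hdet
    rw [hdet']
    exact (Matrix.isUnit_iff_isUnit_det g).mp hg
  obtain ⟨G, hG⟩ := hγunit
  set δ : Matrix (Fin n ⊕ Fin n) (Fin n ⊕ Fin n) ℤ_[p] := ↑(G⁻¹) with hδdef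
  have hγδ : γ * δ = 1 := by rw [hδdef, ← hG]; exact G.mul_inv
  set A' := δ.toBlocks₁₁ with hA'
  set B' := δ.toBlocks₁₂ with hB'
  set C' := δ.toBlocks₂₁ with hC'
  set D' := δ.toBlocks₂₂ with hD'
  have hδblocks : δ = fromBlocks A' B' C' D' := (fromBlocks_toBlocks δ).symm
  have heqs := hγδ
  rw [hγ, hδblocks, fromBlocks_multiply, ← fromBlocks_one] at heqs
  obtain ⟨e1, e2, e3, e4⟩ := fromBlocks_inj.mp heqs
  -- D' is a unit
  have hφp : (PadicInt.toZMod ((p:ℤ_[p])^r) : ZMod p) = 0 := by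
    rw [map_pow, map_natCast, ZMod.natCast_self, zero_pow (by omega)]
  have hD'unit : IsUnit D' := by
    rw [Matrix.isUnit_iff_isUnit_det]
    apply aux_isUnit_of_toZMod_ne_zero
    set Φ : Matrix (Fin n) (Fin n) ℤ_[p] →+* Matrix (Fin n) (Fin n) (ZMod p) :=
      (PadicInt.toZMod (p := p)).mapMatrix with hΦ
    have hΦsmul : Φ ((p:ℤ_[p])^r • c) = 0 := by
      rw [show Φ ((p:ℤ_[p])^r • c) = ((p:ℤ_[p])^r • c).map (⇑(PadicInt.toZMod (p := p)))
        from rfl, aux_map_smul, hφp, zero_smul]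
    have hred4 := congrArg Φ e4
    rw [map_add, _root_.map_mul, _root_.map_mul, _root_.map_one, hΦsmul, zero_mul, zero_add] at hred4
    have hdetprod : (Φ d).det * (Φ D').det = 1 := by rw [← det_mul, hred4, det_one]
    rw [RingHom.map_det]
    intro hzero
    rw [show (RingHom.mapMatrix (PadicInt.toZMod (p := p)) D') = Φ D' from rfl,
      hzero, mul_zero] at hdetprod
    exact zero_ne_one hdetprod
  obtain ⟨Du, hDu⟩ := hD'unit
  have hD'unit : IsUnit D' := ⟨Du, hDu⟩
  set Di : Matrix (Fin n) (Fin n) ℤ_[p] := ↑(Du⁻¹) with hDidef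
  have hDDi : D' * Di = 1 := by rw [hDidef, ← hDu]; exact Du.mul_inv
  have hDiD : Di * D' = 1 := by rw [hDidef, ← hDu]; exact Du.inv_mul
  -- the elements h₁, h₂
  set h₁ : Matrix (Fin n) (Fin n) ℤ_[p] := 1 - (p:ℤ_[p])^r • (B' * Di) with hh₁
  clear_value h₁
  refine ⟨h₁, 1, ?_, isUnit_one, ?_, ?_⟩
  · -- h₁ is a unit
    rw [Matrix.isUnit_iff_isUnit_det]
    apply aux_isUnit_of_toZMod_ne_zero
    rw [RingHom.map_det]
    set Φ : Matrix (Fin n) (Fin n) ℤ_[p] →+* Matrix (Fin n) (Fin n) (ZMod p) :=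
      (PadicInt.toZMod (p := p)).mapMatrix with hΦ
    have hΦsmul : Φ ((p:ℤ_[p])^r • (B' * Di)) = 0 := by
      rw [show Φ ((p:ℤ_[p])^r • (B' * Di))
          = ((p:ℤ_[p])^r • (B' * Di)).map (⇑(PadicInt.toZMod (p := p))) from rfl,
        aux_map_smul, hφp, zero_smul]
    have : Φ h₁ = 1 := by rw [hh₁, _root_.map_sub, _root_.map_one, hΦsmul, sub_zero]
    rw [show (RingHom.mapMatrix (PadicInt.toZMod (p := p)) h₁) = Φ h₁ from rfl, this, det_one]
    exact one_ne_zero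
  · -- congruence
    intro i j
    refine ⟨-(B' * Di) i j, ?_⟩
    rw [hh₁]
    simp only [Matrix.sub_apply, Matrix.smul_apply, smul_eq_mul, mul_neg]
    ring
  · -- the main integrality
    intro i j
    -- mapped data over ℚ_p
    set ΦQ : Matrix (Fin n) (Fin n) ℤ_[p] →+* Matrix (Fin n) (Fin n) ℚ_[p] :=
      (PadicInt.Coe.ringHom (p := p)).mapMatrix with hΦQ
    have hΦQdef : ∀ M : Matrix (Fin n) (Fin n) ℤ_[p], ΦQ M = M.map cf := fun _ => rfl
    have hps : ((p:ℚ_[p])^r) ≠ 0 := pow_ne_zero _ hp0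
    have hsm : ∀ (k : ℕ) (M : Matrix (Fin n) (Fin n) ℤ_[p]),
        ((p:ℤ_[p])^k • M).map cf = (p:ℚ_[p])^k • M.map cf := by
      intro k M; rw [hcrh, aux_map_smul, map_pow, map_natCast]
    have hsm1 : ∀ (M : Matrix (Fin n) (Fin n) ℤ_[p]),
        ((p:ℤ_[p]) • M).map cf = (p:ℚ_[p]) • M.map cf := by
      intro M; rw [hcrh, aux_map_smul, map_natCast]
    have mm : ∀ (X Y : Matrix (Fin n) (Fin n) ℤ_[p]),
        (X * Y).map cf = X.map cf * Y.map cf := by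
      intro X Y
      rw [← hΦQdef, ← hΦQdef, ← hΦQdef, _root_.map_mul]
    have mone : ((1 : Matrix (Fin n) (Fin n) ℤ_[p]).map cf) = 1 := by
      rw [← hΦQdef, _root_.map_one]
    have E1 : a.map cf * A'.map cf + B0.map cf * C'.map cf = 1 := by
      have h := congrArg ΦQ e1
      rw [map_add, _root_.map_mul, _root_.map_mul, _root_.map_one] at h
      exact h
    have E2 : a.map cf * B'.map cf + B0.map cf * D'.map cf = 0 := by
      have h := congrArg ΦQ e2
      rw [map_add, _root_.map_mul, _root_.map_mul, map_zero] at h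
      exact h
    have E3 : (p:ℚ_[p])^r • (c.map cf * A'.map cf) + d.map cf * C'.map cf = 0 := by
      have h := congrArg ΦQ e3
      rw [map_add, _root_.map_mul, _root_.map_mul, map_zero] at h
      rw [show (ΦQ ((p:ℤ_[p])^r • c) : Matrix (Fin n) (Fin n) ℚ_[p])
          = (p:ℚ_[p])^r • c.map cf from hsm r c, Matrix.smul_mul] at h
      exact h
    have E4 : (p:ℚ_[p])^r • (c.map cf * B'.map cf) + d.map cf * D'.map cf = 1 := by
      have h := congrArg ΦQ e4
      rw [map_add, _root_.map_mul, _root_.map_mul, _root_.map_one] at h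
      rw [show (ΦQ ((p:ℤ_[p])^r • c) : Matrix (Fin n) (Fin n) ℚ_[p])
          = (p:ℚ_[p])^r • c.map cf from hsm r c, Matrix.smul_mul] at h
      exact h
    have EDiD : Di.map cf * D'.map cf = 1 := by rw [← mm, hDiD, mone]
    -- inverse of g over ℚ_p
    have hginv : (g.map cf)⁻¹ = fromBlocks (A'.map cf) ((p:ℚ_[p])^r • B'.map cf)
        (((p:ℚ_[p])^r)⁻¹ • C'.map cf) (D'.map cf) := by
      apply Matrix.inv_eq_right_inv
      rw [hgblocks, fromBlocks_map, hbB0, hsm, fromBlocks_multiply, ← fromBlocks_one]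
      refine fromBlocks_inj.mpr ⟨?_, ?_, ?_, ?_⟩
      · rw [Matrix.smul_mul, Matrix.mul_smul, smul_smul, mul_inv_cancel₀ hps, one_smul, E1]
      · rw [Matrix.mul_smul, Matrix.smul_mul, ← smul_add, E2, smul_zero]
      · have h3 := eq_neg_of_add_eq_zero_right E3
        rw [Matrix.mul_smul, h3, smul_neg, smul_smul, inv_mul_cancel₀ hps, one_smul,
          add_neg_cancel]
      · rw [Matrix.mul_smul, ← Matrix.smul_mul]
        rw [Matrix.smul_mul]
        exact E4
    -- inverse of u
    have hu : (uSiegel p n)⁻¹ = fromBlocks 1 (-1) 0 1 := by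
      apply Matrix.inv_eq_right_inv
      rw [uSiegel, fromBlocks_multiply]
      simp [fromBlocks_one]
    -- mapped h₁
    have Hmap : h₁.map cf = 1 - (p:ℚ_[p])^r • (B'.map cf * Di.map cf) := by
      rw [hh₁, ← hΦQdef, _root_.map_sub, _root_.map_one, hΦQdef, hsm, mm]
    -- the integral matrix representing the final product
    set Z : Matrix (Fin n ⊕ Fin n) (Fin n ⊕ Fin n) ℤ_[p] :=
      fromBlocks (h₁ * A' - B' * Di * C') (-((p:ℤ_[p])^s • (B' * Di * B')))
        ((p:ℤ_[p]) • C') D' with hZ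
    have key : (tauSiegelInv p n) ^ (r + 1) *
          (((uSiegel p n)⁻¹ *
              Matrix.fromBlocks (h₁.map cf) 0 0 ((1 : Matrix (Fin n) (Fin n) ℤ_[p]).map cf) *
              uSiegel p n) *
            (g.map cf)⁻¹) *
          (tauSiegel p n) ^ (r + 1) = Z.map cf := by
      rw [mone, hu, uSiegel, hginv, hZ, fromBlocks_map]
      simp only [fromBlocks_multiply, Matrix.mul_one, Matrix.one_mul, Matrix.mul_zero,
        Matrix.zero_mul, add_zero, zero_add, Matrix.neg_mul, Matrix.mul_neg, neg_neg]
      rw [aux_tau_conj]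
      have msub : ∀ (X Y : Matrix (Fin n) (Fin n) ℤ_[p]),
          (X - Y).map cf = X.map cf - Y.map cf := by
        intro X Y; rw [← hΦQdef, map_sub, hΦQdef, hΦQdef]
      have mneg : ∀ (X : Matrix (Fin n) (Fin n) ℤ_[p]),
          (-X).map cf = -(X.map cf) := by
        intro X; rw [← hΦQdef, map_neg, hΦQdef]
      have hH1 : h₁.map cf + (-1 : Matrix (Fin n) (Fin n) ℚ_[p])
          = -((p:ℚ_[p])^r • (B'.map cf * Di.map cf)) := by
        rw [Hmap]; abel
      refine fromBlocks_inj.mpr ⟨?_, ?_, ?_, rfl⟩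
      · rw [hH1, Matrix.neg_mul, Matrix.smul_mul, Matrix.mul_smul, smul_smul,
          mul_inv_cancel₀ hps, one_smul, msub, mm, mm, mm]
        abel
      · have hsc : ((p:ℚ_[p])⁻¹)^(r+1) * ((p:ℚ_[p])^r * (p:ℚ_[p])^r) = (p:ℚ_[p])^s := by
          rw [inv_pow, ← pow_add]
          have hrr : r + r = (r + 1) + s := by omega
          rw [hrr, pow_add (p:ℚ_[p]) (r+1) s, inv_mul_cancel_left₀ (pow_ne_zero _ hp0)]
        rw [hH1, Matrix.mul_smul, Matrix.neg_mul, Matrix.smul_mul, mul_assoc, EDiD, mul_one,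
          Hmap, sub_mul, Matrix.one_mul, Matrix.smul_mul, smul_sub, smul_smul]
        rw [show ((p:ℚ_[p])^r • B'.map cf -
              ((p:ℚ_[p])^r * (p:ℚ_[p])^r) • (B'.map cf * Di.map cf * B'.map cf)) +
              -((p:ℚ_[p])^r • B'.map cf)
            = -(((p:ℚ_[p])^r * (p:ℚ_[p])^r) • (B'.map cf * Di.map cf * B'.map cf)) from by abel]
        rw [smul_neg, smul_smul, hsc, mneg, hsm, mm, mm]
      · rw [smul_smul, hsm1]
        congr 1
        rw [pow_succ, mul_comm ((p:ℚ_[p])^r) (p:ℚ_[p]), mul_assoc, mul_inv_cancel₀ hps, mul_one]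
    rw [key, Matrix.map_apply]
    rw [hcf]
    rw [PadicInt.padic_norm_e_of_padicInt]
    exact PadicInt.norm_le_one _
end

section
/- Let p be a prime, M a finitely generated ℤ_p-module, and T a ℤ_p-linear endomorphism of M. Then for every x ∈ M the sequence (T^{n!}(x))_{n ≥ 1} converges in the p-adic topology of M, and the limit map e(x) = lim_{n→∞} T^{n!}(x) is a ℤ_p-linear idempotent endomorphism of M commuting with T; moreover M = e(M) ⊕ (1−e)(M), T restricts to a bijection of e(M), and for every y ∈ (1−e)(M) one has T^{n!}(y) → 0; consequently e(M) is the largest T-stable direct summand of M on which T acts bijectively (the ordinary projector e^{ord} = lim T^{n!}). -/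
namespace Stmt17Aux

open Submodule Function

variable {p : ℕ} [Fact p.Prime]

section mem

variable {M : Type*} [AddCommGroup M] [Module ℤ_[p] M]

lemma mem_pk {x : M} {k : ℕ} :
    x ∈ (Ideal.span {(p : ℤ_[p])} ^ k) • (⊤ : Submodule ℤ_[p] M) ↔
      ∃ y : M, x = (p : ℤ_[p]) ^ k • y := by
  rw [Ideal.span_singleton_pow, Submodule.ideal_span_singleton_smul]
  constructor
  · intro h
    rw [← SetLike.mem_coe, Submodule.coe_pointwise_smul] at h
    obtain ⟨y, -, hy⟩ := h
    exact ⟨y, hy.symm⟩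
  · rintro ⟨y, rfl⟩
    exact Submodule.smul_mem_pointwise_smul y _ ⊤ trivial

lemma haus0 {M₀ : Type} [AddCommGroup M₀] [Module ℤ_[p] M₀] [Module.Finite ℤ_[p] M₀] {x : M₀}
    (h : ∀ k : ℕ, x ∈ (Ideal.span {(p : ℤ_[p])} ^ k) • (⊤ : Submodule ℤ_[p] M₀)) : x = 0 := by
  have hne : (Ideal.span {(p : ℤ_[p])} : Ideal ℤ_[p]) ≠ ⊤ := by
    rw [← PadicInt.maximalIdeal_eq_span_p]
    exact (IsLocalRing.maximalIdeal.isMaximal _).ne_top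
  have hb := Ideal.iInf_pow_smul_eq_bot_of_isLocalRing
    (R := ℤ_[p]) (I := Ideal.span {(p : ℤ_[p])}) (M := M₀) hne
  have hx : x ∈ (⨅ i : ℕ, (Ideal.span {(p : ℤ_[p])}) ^ i • (⊤ : Submodule ℤ_[p] M₀)) :=
    (Submodule.mem_iInf _).mpr h
  rw [hb] at hx
  simpa using hx

lemma haus [Module.Finite ℤ_[p] M] {x : M}
    (h : ∀ k : ℕ, x ∈ (Ideal.span {(p : ℤ_[p])} ^ k) • (⊤ : Submodule ℤ_[p] M)) : x = 0 := by
  obtain ⟨n, ρ, hρ⟩ := Module.Finite.exists_fin' ℤ_[p] M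
  let q := LinearMap.quotKerEquivOfSurjective ρ hρ
  have hx0 : q.symm x = 0 := by
    apply haus0 (p := p)
    intro k
    obtain ⟨y, hy⟩ := mem_pk.mp (h k)
    exact mem_pk.mpr ⟨q.symm y, by rw [hy, map_smul]⟩
  have := congrArg q hx0
  simpa using this

end mem

lemma isPrecomplete_of_surjective {R : Type*} [CommRing R] (I : Ideal R)
    {F E : Type*} [AddCommGroup F] [Module R F] [AddCommGroup E] [Module R E]
    (π : F →ₗ[R] E) (hπ : Surjective π) (h : IsPrecomplete I F) : IsPrecomplete I E := by
  constructor
  intro f hf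
  have hmap : ∀ n : ℕ, Submodule.map π (I ^ n • (⊤ : Submodule R F)) = I ^ n • (⊤ : Submodule R E) := by
    intro n
    rw [Submodule.map_smul'', Submodule.map_top, LinearMap.range_eq_top.mpr hπ]
  have key : ∀ n : ℕ, ∃ d : F, d ∈ (I ^ n • ⊤ : Submodule R F) ∧ π d = f (n + 1) - f n := by
    intro n
    have h1 : f (n + 1) - f n ∈ (I ^ n • ⊤ : Submodule R E) := by
      have h2 := (SModEq.sub_mem).mp (hf (Nat.le_succ n))
      simpa using neg_mem h2
    rw [← hmap n] at h1
    obtain ⟨d, hd, hd2⟩ := h1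
    exact ⟨d, hd, hd2⟩
  choose d hd hd2 using key
  obtain ⟨g0, hg0⟩ := hπ (f 0)
  set g : ℕ → F := fun n => g0 + ∑ j ∈ Finset.range n, d j with hg
  have hπg : ∀ n, π (g n) = f n := by
    intro n
    simp only [hg, map_add, map_sum, hd2, hg0]
    rw [Finset.sum_range_sub (f := f)]
    abel
  have hgc : ∀ {a b : ℕ}, a ≤ b → g a ≡ g b [SMOD (I ^ a • ⊤ : Submodule R F)] := by
    intro a b hab
    rw [SModEq.sub_mem]
    have : g a - g b = -∑ j ∈ Finset.Ico a b, d j := by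
      simp only [hg]
      rw [← Finset.sum_range_add_sum_Ico d hab]
      abel
    rw [this]
    refine neg_mem (sum_mem fun j hj => ?_)
    exact Submodule.smul_mono (Ideal.pow_le_pow_right (Finset.mem_Ico.mp hj).1) le_rfl (hd j)
  obtain ⟨L, hL⟩ := h.prec hgc
  refine ⟨π L, fun n => ?_⟩
  rw [SModEq.sub_mem]
  have : f n - π L = π (g n - L) := by rw [map_sub, hπg]
  rw [this, ← hmap n]
  exact Submodule.mem_map_of_mem ((SModEq.sub_mem).mp (hL n))

lemma isPrecomplete_pi (m : ℕ) :
    IsPrecomplete (Ideal.span {(p : ℤ_[p])}) (Fin m → ℤ_[p]) := by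
  have hZ : IsPrecomplete (Ideal.span {(p : ℤ_[p])}) ℤ_[p] :=
    by rw [← PadicInt.maximalIdeal_eq_span_p]; infer_instance
  constructor
  intro f hf
  have hcomp : ∀ i : Fin m, ∃ L : ℤ_[p], ∀ n, f n i ≡ L
      [SMOD ((Ideal.span {(p : ℤ_[p])}) ^ n • ⊤ : Submodule ℤ_[p] ℤ_[p])] := by
    intro i
    apply hZ.prec
    intro a b hab
    rw [SModEq.sub_mem]
    obtain ⟨y, hy⟩ := mem_pk.mp ((SModEq.sub_mem).mp (hf hab))
    refine mem_pk.mpr ⟨y i, ?_⟩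
    have := congrFun hy i
    simpa using this
  choose L hL using hcomp
  refine ⟨L, fun n => ?_⟩
  rw [SModEq.sub_mem]
  have hmem : ∀ i : Fin m, ∃ y : ℤ_[p], f n i - L i = (p : ℤ_[p]) ^ n • y := by
    intro i
    exact mem_pk.mp ((SModEq.sub_mem).mp (hL i n))
  choose y hy using hmem
  exact mem_pk.mpr ⟨y, funext fun i => by simpa using hy i⟩

lemma isNoetherian_end (M : Type*) [AddCommGroup M] [Module ℤ_[p] M] [Module.Finite ℤ_[p] M] :
    IsNoetherian ℤ_[p] (M →ₗ[ℤ_[p]] M) := by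
  obtain ⟨m, g, hg⟩ := Module.Finite.exists_fin (R := ℤ_[p]) (M := M)
  let Φ : (M →ₗ[ℤ_[p]] M) →ₗ[ℤ_[p]] (Fin m → M) := LinearMap.pi fun i => LinearMap.applyₗ (g i)
  have hinj : Injective Φ := by
    intro a b hab
    ext x
    have hx : x ∈ span ℤ_[p] (Set.range g) := hg ▸ mem_top
    induction hx using Submodule.span_induction with
    | mem z hz =>
      obtain ⟨i, rfl⟩ := hz
      exact congrFun hab i
    | zero => simp
    | add u v _ _ hu hv => simp [map_add, hu, hv]
    | smul c u _ hu => simp [map_smul, hu]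
  exact isNoetherian_of_injective Φ hinj

lemma finite_quot (M : Type*) [AddCommGroup M] [Module ℤ_[p] M] [Module.Finite ℤ_[p] M] (k : ℕ) :
    Finite (M ⧸ ((Ideal.span {(p : ℤ_[p])} ^ k) • (⊤ : Submodule ℤ_[p] M))) := by
  obtain ⟨m, ρ, hρ⟩ := Module.Finite.exists_fin' ℤ_[p] M
  haveI : NeZero (p ^ k) := ⟨pow_ne_zero _ (Nat.Prime.ne_zero Fact.out)⟩
  set P := (Ideal.span {(p : ℤ_[p])} ^ k) • (⊤ : Submodule ℤ_[p] M) with hP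
  let F : (Fin m → ZMod (p ^ k)) → M ⧸ P := fun v =>
    Submodule.Quotient.mk (ρ fun i => ((v i).val : ℤ_[p]))
  apply Finite.of_surjective F
  intro c
  obtain ⟨w, rfl⟩ := Submodule.Quotient.mk_surjective _ c
  obtain ⟨u, rfl⟩ := hρ w
  refine ⟨fun i => PadicInt.toZModPow k (u i), ?_⟩
  show Submodule.Quotient.mk _ = _
  rw [Submodule.Quotient.eq]
  have hker : ∀ i : Fin m,
      (((PadicInt.toZModPow k (u i)).val : ℤ_[p]) - u i) ∈ Ideal.span {(p : ℤ_[p]) ^ k} := by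
    intro i
    rw [← PadicInt.ker_toZModPow, RingHom.mem_ker, map_sub, map_natCast,
      ZMod.natCast_zmod_val, sub_self]
  choose y hy using fun i => Ideal.mem_span_singleton'.mp (hker i)
  refine mem_pk.mpr ⟨ρ fun i => y i, ?_⟩
  rw [← map_smul, ← map_sub]
  congr 1
  funext i
  simp only [Pi.sub_apply, Pi.smul_apply, smul_eq_mul]
  rw [← hy i, mul_comm]

lemma exists_cycle {M : Type*} [AddCommGroup M] [Module ℤ_[p] M] [Module.Finite ℤ_[p] M]
    (T : M →ₗ[ℤ_[p]] M) (k : ℕ) :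
    ∃ i r : ℕ, 0 < r ∧ ∀ s t : ℕ, i ≤ s →
      T ^ (s + t * r) - T ^ s ∈
        (Ideal.span {(p : ℤ_[p])} ^ k) • (⊤ : Submodule ℤ_[p] (M →ₗ[ℤ_[p]] M)) := by
  haveI := isNoetherian_end (p := p) M
  haveI := finite_quot (p := p) (M →ₗ[ℤ_[p]] M) k
  set P := (Ideal.span {(p : ℤ_[p])} ^ k) • (⊤ : Submodule ℤ_[p] (M →ₗ[ℤ_[p]] M)) with hPdef
  obtain ⟨a, b, hab, heq⟩ := Finite.exists_ne_map_eq_of_infinite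
    (fun n : ℕ => Submodule.Quotient.mk (p := P) (T ^ n))
  suffices h : ∀ i j : ℕ, i < j → T ^ j - T ^ i ∈ P →
      ∃ i' r, 0 < r ∧ ∀ s t, i' ≤ s → T ^ (s + t * r) - T ^ s ∈ P by
    rcases lt_or_gt_of_ne hab with h1 | h1
    · exact h a b h1 (by have := (Submodule.Quotient.eq P).mp heq; simpa using neg_mem this)
    · exact h b a h1 (by have := (Submodule.Quotient.eq P).mp heq; simpa using this)
  intro i j hij hmem
  refine ⟨i, j - i, by omega, ?_⟩
  have hstep : ∀ s, i ≤ s → T ^ (s + (j - i)) - T ^ s ∈ P := by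
    intro s hs
    have hfac : T ^ (s + (j - i)) - T ^ s = T ^ (s - i) * (T ^ j - T ^ i) := by
      rw [mul_sub, ← pow_add, ← pow_add]
      congr 2 <;> omega
    rw [hfac]
    obtain ⟨g, hg⟩ := mem_pk.mp hmem
    exact mem_pk.mpr ⟨T ^ (s - i) * g, by rw [hg, mul_smul_comm]⟩
  intro s t hs
  induction t with
  | zero => simpa using zero_mem P
  | succ t ih =>
    have h1 := hstep (s + t * (j - i)) (by omega)
    have h2 : T ^ (s + (t + 1) * (j - i)) - T ^ s =
        (T ^ (s + t * (j - i) + (j - i)) - T ^ (s + t * (j - i))) +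
          (T ^ (s + t * (j - i)) - T ^ s) := by
      have h3 : s + (t + 1) * (j - i) = s + t * (j - i) + (j - i) := by ring
      rw [h3]; abel
    rw [h2]; exact add_mem h1 ih

end Stmt17Aux

/-- **Hida's ordinary projector.** Let `M` be a finitely generated
`ℤ_p`-module and `T` a `ℤ_p`-linear endomorphism of `M`.  Then for every `x ∈ M` the
sequence `T^{n!} x` converges `p`-adically; the limit map `e = lim T^{n!}` is a
`ℤ_p`-linear idempotent commuting with `T`, `M = e M ⊕ (1 - e) M`, `T` is bijective on
`e M`, `T^{n!} → 0` on `(1 - e) M`, and `e M` is the largest `T`-stable direct summand of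
`M` on which `T` acts bijectively. -/
theorem stmt_17 (p : ℕ) [Fact p.Prime] (M : Type*) [AddCommGroup M] [Module ℤ_[p] M]
    [Module.Finite ℤ_[p] M] (T : M →ₗ[ℤ_[p]] M) :
    ∃ e : M →ₗ[ℤ_[p]] M,
      (∀ (x : M) (k : ℕ), ∃ N : ℕ, ∀ n ≥ N,
        (T ^ n.factorial) x - e x ∈
          (Ideal.span {(p : ℤ_[p])} ^ k) • (⊤ : Submodule ℤ_[p] M)) ∧
      e.comp e = e ∧
      e.comp T = T.comp e ∧
      IsCompl (LinearMap.range e) (LinearMap.range (LinearMap.id - e)) ∧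
      Set.BijOn ⇑T ↑(LinearMap.range e) ↑(LinearMap.range e) ∧
      (∀ y ∈ LinearMap.range (LinearMap.id - e), ∀ k : ℕ, ∃ N : ℕ, ∀ n ≥ N,
        (T ^ n.factorial) y ∈ (Ideal.span {(p : ℤ_[p])} ^ k) • (⊤ : Submodule ℤ_[p] M)) ∧
      (∀ N : Submodule ℤ_[p] M, (∃ N' : Submodule ℤ_[p] M, IsCompl N N') →
        (∀ x ∈ N, T x ∈ N) → Set.BijOn ⇑T ↑N ↑N → N ≤ LinearMap.range e) := by
  classical
  haveI hNoeE := Stmt17Aux.isNoetherian_end (p := p) M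
  -- cycle data for each k
  have key : ∀ k : ℕ, ∃ ir : ℕ × ℕ, 0 < ir.2 ∧ ∀ s t : ℕ, ir.1 ≤ s →
      T ^ (s + t * ir.2) - T ^ s ∈
        (Ideal.span {(p : ℤ_[p])} ^ k) • (⊤ : Submodule ℤ_[p] (M →ₗ[ℤ_[p]] M)) := by
    intro k
    obtain ⟨i, r, hr, hcyc⟩ := Stmt17Aux.exists_cycle T k
    exact ⟨(i, r), hr, hcyc⟩
  choose ir hr hcyc using key
  set N : ℕ → ℕ := fun k => max (ir k).1 (ir k).2 with hNdef
  set B : ℕ → ℕ := fun k => (Finset.range (k + 1)).sup N with hBdef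
  have hNB : ∀ k, N k ≤ B k := fun k => Finset.le_sup (Finset.self_mem_range_succ k)
  have hBmono : ∀ {a b : ℕ}, a ≤ b → B a ≤ B b := fun {a b} hab =>
    Finset.sup_mono (Finset.range_subset_range.mpr (by omega))
  have hfact : ∀ k n m', N k ≤ n → n ≤ m' →
      T ^ m'.factorial - T ^ n.factorial ∈
        (Ideal.span {(p : ℤ_[p])} ^ k) • (⊤ : Submodule ℤ_[p] (M →ₗ[ℤ_[p]] M)) := by
    intro k n m' hn hnm
    have hi : (ir k).1 ≤ n.factorial :=
      le_trans (le_trans (le_max_left _ _) hn) (Nat.self_le_factorial n)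
    have hrdvd : (ir k).2 ∣ n.factorial :=
      Nat.dvd_factorial (hr k) (le_trans (le_max_right _ _) hn)
    have hfd : n.factorial ∣ m'.factorial := Nat.factorial_dvd_factorial hnm
    have hle : n.factorial ≤ m'.factorial := Nat.factorial_le hnm
    have hdvd2 : (ir k).2 ∣ (m'.factorial - n.factorial) :=
      Nat.dvd_sub (hrdvd.trans hfd) hrdvd
    have hexp : m'.factorial = n.factorial + (m'.factorial - n.factorial) / (ir k).2 * (ir k).2 := by
      rw [Nat.div_mul_cancel hdvd2]; omega
    have := hcyc k n.factorial ((m'.factorial - n.factorial) / (ir k).2) hi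
    rwa [← hexp] at this
  have hdouble : ∀ k n, N k ≤ n →
      T ^ (2 * n.factorial) - T ^ n.factorial ∈
        (Ideal.span {(p : ℤ_[p])} ^ k) • (⊤ : Submodule ℤ_[p] (M →ₗ[ℤ_[p]] M)) := by
    intro k n hn
    have hi : (ir k).1 ≤ n.factorial :=
      le_trans (le_trans (le_max_left _ _) hn) (Nat.self_le_factorial n)
    have hrdvd : (ir k).2 ∣ n.factorial :=
      Nat.dvd_factorial (hr k) (le_trans (le_max_right _ _) hn)
    have hexp : 2 * n.factorial = n.factorial + n.factorial / (ir k).2 * (ir k).2 := by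
      rw [Nat.div_mul_cancel hrdvd]; omega
    have := hcyc k n.factorial (n.factorial / (ir k).2) hi
    rwa [← hexp] at this
  -- limit
  obtain ⟨m, ρ, hρ⟩ := Module.Finite.exists_fin' ℤ_[p] (M →ₗ[ℤ_[p]] M)
  have hpre := Stmt17Aux.isPrecomplete_of_surjective (Ideal.span {(p : ℤ_[p])}) ρ hρ
    (Stmt17Aux.isPrecomplete_pi m)
  have hcauchy : ∀ {a b : ℕ}, a ≤ b →
      T ^ (B a).factorial ≡ T ^ (B b).factorial
        [SMOD ((Ideal.span {(p : ℤ_[p])}) ^ a • ⊤ : Submodule ℤ_[p] (M →ₗ[ℤ_[p]] M))] := by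
    intro a b hab
    rw [SModEq.sub_mem]
    have := hfact a (B a) (B b) (hNB a) (hBmono hab)
    simpa using neg_mem this
  obtain ⟨e, he⟩ := hpre.prec hcauchy
  have hconv : ∀ k n, B k ≤ n →
      T ^ n.factorial - e ∈
        (Ideal.span {(p : ℤ_[p])} ^ k) • (⊤ : Submodule ℤ_[p] (M →ₗ[ℤ_[p]] M)) := by
    intro k n hn
    have h1 := hfact k (B k) n (hNB k) hn
    have h2 := (SModEq.sub_mem).mp (he k)
    have h3 : T ^ n.factorial - e =
        (T ^ n.factorial - T ^ (B k).factorial) + (T ^ (B k).factorial - e) := by abel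
    rw [h3]; exact add_mem h1 h2
  have happly : ∀ (f : M →ₗ[ℤ_[p]] M) (x : M) (k : ℕ),
      f ∈ (Ideal.span {(p : ℤ_[p])} ^ k) • (⊤ : Submodule ℤ_[p] (M →ₗ[ℤ_[p]] M)) →
      f x ∈ (Ideal.span {(p : ℤ_[p])} ^ k) • (⊤ : Submodule ℤ_[p] M) := by
    intro f x k hf
    obtain ⟨g, hg⟩ := Stmt17Aux.mem_pk.mp hf
    exact Stmt17Aux.mem_pk.mpr ⟨g x, by rw [hg]; simp⟩
  -- idempotency
  have hmulL : ∀ (c f : M →ₗ[ℤ_[p]] M) (k : ℕ),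
      f ∈ (Ideal.span {(p : ℤ_[p])} ^ k) • (⊤ : Submodule ℤ_[p] (M →ₗ[ℤ_[p]] M)) →
      c * f ∈ (Ideal.span {(p : ℤ_[p])} ^ k) • (⊤ : Submodule ℤ_[p] (M →ₗ[ℤ_[p]] M)) := by
    intro c f k hf
    obtain ⟨g, hg⟩ := Stmt17Aux.mem_pk.mp hf
    exact Stmt17Aux.mem_pk.mpr ⟨c * g, by rw [hg, mul_smul_comm]⟩
  have hmulR : ∀ (c f : M →ₗ[ℤ_[p]] M) (k : ℕ),
      f ∈ (Ideal.span {(p : ℤ_[p])} ^ k) • (⊤ : Submodule ℤ_[p] (M →ₗ[ℤ_[p]] M)) →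
      f * c ∈ (Ideal.span {(p : ℤ_[p])} ^ k) • (⊤ : Submodule ℤ_[p] (M →ₗ[ℤ_[p]] M)) := by
    intro c f k hf
    obtain ⟨g, hg⟩ := Stmt17Aux.mem_pk.mp hf
    exact Stmt17Aux.mem_pk.mpr ⟨g * c, by rw [hg, smul_mul_assoc]⟩
  have he2' : e * e - e = 0 := by
    apply Stmt17Aux.haus (p := p)
    intro k
    set a := T ^ (B k).factorial with ha_def
    have ha := hconv k (B k) le_rfl
    have haa : a * a - a ∈
        (Ideal.span {(p : ℤ_[p])} ^ k) • (⊤ : Submodule ℤ_[p] (M →ₗ[ℤ_[p]] M)) := by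
      have h := hdouble k (B k) (hNB k)
      rwa [two_mul, pow_add] at h
    have hidentity : e * e - e = -((a - e) * e) + -(a * (a - e)) + (a * a - a) + (a - e) := by
      noncomm_ring
    rw [hidentity]
    exact add_mem (add_mem (add_mem (neg_mem (hmulR e _ k ha)) (neg_mem (hmulL a _ k ha))) haa) ha
  have he2 : e.comp e = e := by
    rw [← Module.End.mul_eq_comp]; exact sub_eq_zero.mp he2'
  have hcommTa : ∀ n : ℕ, T ^ n * T = T * T ^ n := fun n => by
    rw [← pow_succ, ← pow_succ']
  have he3' : e * T - T * e = 0 := by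
    apply Stmt17Aux.haus (p := p)
    intro k
    set a := T ^ (B k).factorial with ha_def
    have ha := hconv k (B k) le_rfl
    have hzero : a * T - T * a = 0 := by rw [hcommTa, sub_self]
    have hidentity : e * T - T * e = -((a - e) * T) + T * (a - e) + (a * T - T * a) := by
      noncomm_ring
    rw [hidentity, hzero]
    exact add_mem (add_mem (neg_mem (hmulR T _ k ha)) (hmulL T _ k ha)) (zero_mem _)
  have he3 : e.comp T = T.comp e := by
    rw [← Module.End.mul_eq_comp, ← Module.End.mul_eq_comp]; exact sub_eq_zero.mp he3'
  have hee : ∀ x : M, e (e x) = e x := fun x => by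
    have := LinearMap.congr_fun he2 x; simpa using this
  have hcommpt : ∀ x : M, e (T x) = T (e x) := fun x => by
    have := LinearMap.congr_fun he3 x; simpa using this
  have hcommpow : ∀ (j : ℕ) (x : M), e ((T ^ j) x) = (T ^ j) (e x) := by
    intro j
    induction j with
    | zero => intro x; simp
    | succ j ih =>
      intro x
      rw [pow_succ, Module.End.mul_apply, Module.End.mul_apply, ih, hcommpt]
  have hmemrange : ∀ x : M, e x = x → x ∈ LinearMap.range e := fun x hx => ⟨x, hx⟩
  have hrangeeq : ∀ x : M, x ∈ LinearMap.range e → e x = x := by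
    rintro x ⟨u, rfl⟩; exact hee u
  refine ⟨e, ?_, he2, he3, ?_, ⟨?_, ?_, ?_⟩, ?_, ?_⟩
  · -- pointwise convergence
    intro x k
    refine ⟨B k, fun n hn => ?_⟩
    have := happly _ x k (hconv k n hn)
    simpa [LinearMap.sub_apply] using this
  · -- IsCompl
    constructor
    · rw [Submodule.disjoint_def]
      rintro x ⟨u, rfl⟩ ⟨v, hv⟩
      have h2 : e (e u) = 0 := by
        rw [← hv]
        show e (((LinearMap.id : M →ₗ[ℤ_[p]] M) - e) v) = 0
        simp only [LinearMap.sub_apply, LinearMap.id_apply, map_sub]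
        rw [hee, sub_self]
      rw [← hee u, h2]
    · rw [codisjoint_iff, eq_top_iff]
      intro x _
      have hx : x = e x + ((LinearMap.id : M →ₗ[ℤ_[p]] M) - e) x := by
        simp [LinearMap.sub_apply]
      rw [hx]
      exact Submodule.add_mem_sup ⟨x, rfl⟩ ⟨x, rfl⟩
  · -- MapsTo
    rintro x ⟨u, rfl⟩
    exact ⟨T u, hcommpt u⟩
  · -- InjOn
    intro x hx y hy hxy
    have hex : e x = x := hrangeeq x hx
    have hey : e y = y := hrangeeq y hy
    have hsub : x - y = 0 := by
      apply Stmt17Aux.haus (p := p)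
      intro k
      have hTz : T (x - y) = 0 := by rw [map_sub, hxy, sub_self]
      obtain ⟨m', hm'⟩ : ∃ m', (B k).factorial = m' + 1 :=
        ⟨(B k).factorial - 1, by have := Nat.factorial_pos (B k); omega⟩
      have hTn : (T ^ (B k).factorial) (x - y) = 0 := by
        rw [hm', pow_succ, Module.End.mul_apply, hTz, map_zero]
      have hexy : e (x - y) = x - y := by rw [map_sub, hex, hey]
      have hmem := happly _ (x - y) k (hconv k (B k) le_rfl)
      rw [LinearMap.sub_apply, hTn, hexy, zero_sub] at hmem
      simpa using neg_mem hmem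
    exact sub_eq_zero.mp hsub
  · -- SurjOn
    have hNN : LinearMap.range e ≤
        Submodule.map T (LinearMap.range e) ⊔ (Ideal.span {(p : ℤ_[p])}) • LinearMap.range e := by
      rintro x ⟨u, rfl⟩
      set n := B 1 with hn_def
      obtain ⟨m', hm'⟩ : ∃ m', n.factorial = m' + 1 :=
        ⟨n.factorial - 1, by have := Nat.factorial_pos n; omega⟩
      have h2 : e ((T ^ n.factorial) (e u)) ∈ Submodule.map T (LinearMap.range e) := by
        rw [hm', pow_succ', Module.End.mul_apply, hcommpt]
        exact ⟨e ((T ^ m') (e u)), ⟨_, rfl⟩, rfl⟩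
      have h3 : e u - e ((T ^ n.factorial) (e u)) ∈
          (Ideal.span {(p : ℤ_[p])}) • LinearMap.range e := by
        have hd := happly _ (e u) 1 (hconv 1 n le_rfl)
        obtain ⟨y, hy⟩ := Stmt17Aux.mem_pk.mp hd
        rw [LinearMap.sub_apply, hee] at hy
        have h5 : e u - e ((T ^ n.factorial) (e u)) = (p : ℤ_[p]) • (-(e y)) := by
          have h6 : e u - (T ^ n.factorial) (e u) = -((p : ℤ_[p]) ^ 1 • y) := by
            rw [← hy]; abel
          calc e u - e ((T ^ n.factorial) (e u)) = e (e u - (T ^ n.factorial) (e u)) := by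
                rw [map_sub, hee]
            _ = e (-((p : ℤ_[p]) ^ 1 • y)) := by rw [h6]
            _ = (p : ℤ_[p]) • (-(e y)) := by
                rw [map_neg, map_smul, pow_one, smul_neg]
        rw [h5]
        exact Submodule.smul_mem_smul (Ideal.mem_span_singleton_self _) (neg_mem ⟨y, rfl⟩)
      have hsplit : e u = e ((T ^ n.factorial) (e u)) + (e u - e ((T ^ n.factorial) (e u))) := by
        abel
      rw [hsplit]
      exact Submodule.add_mem_sup h2 h3
    have hjac : (Ideal.span {(p : ℤ_[p])} : Ideal ℤ_[p]) ≤ Ideal.jacobson ⊥ := by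
      rw [IsLocalRing.jacobson_eq_maximalIdeal ⊥ bot_ne_top]
      exact le_of_eq PadicInt.maximalIdeal_eq_span_p.symm
    have hKle : LinearMap.range e ≤ Submodule.map T (LinearMap.range e) :=
      Submodule.le_of_le_smul_of_le_jacobson_bot
        (IsNoetherian.noetherian (LinearMap.range e)) hjac hNN
    intro x hx
    obtain ⟨y, hyK, hyx⟩ := hKle hx
    exact ⟨y, hyK, hyx⟩
  · -- T^{n!} → 0 on range (1 - e)
    rintro y ⟨v, rfl⟩ k
    refine ⟨B k, fun n hn => ?_⟩
    have hy0 : e (((LinearMap.id : M →ₗ[ℤ_[p]] M) - e) v) = 0 := by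
      simp only [LinearMap.sub_apply, LinearMap.id_apply, map_sub]
      rw [hee, sub_self]
    have := happly _ (((LinearMap.id : M →ₗ[ℤ_[p]] M) - e) v) k (hconv k n hn)
    rw [LinearMap.sub_apply, hy0, sub_zero] at this
    exact this
  · -- maximality
    rintro K - - hbij x hx
    have hsurjiter : ∀ j : ℕ, ∃ z ∈ K, (T ^ j) z = x := by
      intro j
      induction j with
      | zero => exact ⟨x, hx, by simp⟩
      | succ j ih =>
        obtain ⟨z, hz, hzx⟩ := ih
        obtain ⟨w, hw, hwz⟩ := hbij.surjOn hz
        exact ⟨w, hw, by rw [pow_succ, Module.End.mul_apply, hwz, hzx]⟩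
    have hfix : x - e x = 0 := by
      apply Stmt17Aux.haus (p := p)
      intro k
      obtain ⟨z, hz, hzx⟩ := hsurjiter (B k).factorial
      obtain ⟨h, hh⟩ := Stmt17Aux.mem_pk.mp (hconv k (B k) le_rfl)
      have hTe : (T ^ (B k).factorial : M →ₗ[ℤ_[p]] M) = e + (p : ℤ_[p]) ^ k • h := by
        rw [← hh]; abel
      have hx1 : x = e z + (p : ℤ_[p]) ^ k • h z := by
        rw [← hzx, hTe]; simp
      have hx2 : e x = e z + (p : ℤ_[p]) ^ k • e (h z) := by
        rw [hx1, map_add, hee, map_smul]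
      have : x - e x = (p : ℤ_[p]) ^ k • (h z - e (h z)) := by
        rw [hx2, hx1, smul_sub]; abel
      exact Stmt17Aux.mem_pk.mpr ⟨h z - e (h z), this⟩
    exact ⟨x, (sub_eq_zero.mp hfix).symm⟩
end
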